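/- Let d ∈ ℕ, c ≥ 0, m ∈ ℕ₀, R ≥ e_m, and let V ∈ L¹_loc be real-valued with V(x) ≤ (d(4-d)+4c+c²)/(4|x|²) + ((c+2)/(2|x|²)) Σ_{j=1}^m ∏_{k=1}^j (ln_k(|x|))^{-1} for all |x| > R. Define ψ^l_{c,m}(x) := |x|^{-c/2-d/2} ∏_{j=1}^m (ln_j(|x|))^{-1/2}. Then ψ^l_{c,m} is a subsolution of -Δ + V at energy 0 on U_R = {x : |x| > R}: for every nonnegative φ ∈ C_c^∞(U_R), ∫ (∇φ·∇ψ^l_{c,m} + V φ ψ^l_{c,m}) dx ≤ 0. -/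

import Mathlib

/-!
On `{|x| > e_m}` the function `ψ = ψˡ_{c,m}` is radial, `ψ(x) = e^{F(|x|)}`, so
`Δψ = (F'' + F'² + (d-1) F'/r) ψ`. Writing `P_j = ∏_{k ≤ j} (ln_k r)⁻¹`, `T = Σ_{j ≤ m} P_j` and
`S = Σ_{j ≤ m} P_j Σ_{k ≤ j} P_k`, one has `r F' = -(c+d)/2 - T/2` and `r² F'' = -r F' + S/2`,
and then `r² (F'' + F'² + (d-1) F'/r) = r² lowerBound + T²/4 + S/2`. Hence `Vψ ≤ Δψ` pointwise,
and one integration by parts against `φ ≥ 0` gives the weak inequality.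
-/

open MeasureTheory Real Filter Finset
open scoped RealInnerProductSpace ENNReal Topology

/-- Iterated exponential: `iterExp 0 = 0`, `iterExp (n+1) = exp (iterExp n)`
(the `e_n` of the paper). -/
noncomputable def iterExp : ℕ → ℝ
  | 0 => 0
  | n + 1 => Real.exp (iterExp n)

/-- Iterated logarithm: `iterLog 1 r = log r`, `iterLog (n+1) r = log (iterLog n r)`
(the `ln_n` of the paper). -/
noncomputable def iterLog : ℕ → ℝ → ℝ
  | 0, r => r
  | n + 1, r => Real.log (iterLog n r)

/-- The critical potential bound
`(d(4-d)+4c+c²)/(4r²) + ((c+2)/(2r²)) Σ_{j=1}^m ∏_{k=1}^j (ln_k r)⁻¹`. -/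
noncomputable def lowerBound (d : ℕ) (c : ℝ) (m : ℕ) (r : ℝ) : ℝ :=
  ((d : ℝ) * (4 - (d : ℝ)) + 4 * c + c ^ 2) / (4 * r ^ 2)
    + ((c + 2) / (2 * r ^ 2)) * ∑ j ∈ Finset.Icc 1 m, ∏ k ∈ Finset.Icc 1 j, (iterLog k r)⁻¹

/-- `ψˡ_{c,m}(x) = |x|^{-c/2-d/2} ∏_{j=1}^m (ln_j |x|)^{-1/2}`. -/
noncomputable def psiL (d : ℕ) (c : ℝ) (m : ℕ) (x : EuclideanSpace ℝ (Fin d)) : ℝ :=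
  ‖x‖ ^ (-(c / 2) - (d : ℝ) / 2) * ∏ j ∈ Finset.Icc 1 m, (iterLog j ‖x‖) ^ (-(1 : ℝ) / 2)

open Laplacian InnerProductSpace

lemma integrable_of_continuousOn_of_support_subset {X : Type*} [TopologicalSpace X] [T2Space X]
    [MeasurableSpace X] [OpensMeasurableSpace X] {μ : Measure X} [IsFiniteMeasureOnCompacts μ]
    {K : Set X} (hK : IsCompact K) {f : X → ℝ} (hf : ContinuousOn f K)
    (hfK : Function.support f ⊆ K) : Integrable f μ :=
  (integrableOn_iff_integrable_of_support_subset hfK).1 (hf.integrableOn_compact hK)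

section Calculus

variable {E : Type*} [NormedAddCommGroup E] [InnerProductSpace ℝ E]

lemma HasDerivAt.hasFDerivAt_comp_norm {u : ℝ → ℝ} {u' : ℝ} {x : E} (hu : HasDerivAt u u' ‖x‖)
    (hx : x ≠ 0) : HasFDerivAt (fun y ↦ u ‖y‖) ((u' / ‖x‖) • innerSL ℝ x) x := by
  have hsqrt := (hasDerivAt_sqrt (by positivity : ‖x‖ ^ 2 ≠ 0)).comp_hasFDerivAt x
    (hasStrictFDerivAt_norm_sq x).hasFDerivAt
  simp only [sqrt_sq (norm_nonneg _), Function.comp_def] at hsqrt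
  refine (hu.comp_hasFDerivAt x hsqrt).congr_fderiv ?_
  ext v
  simp only [one_div, mul_inv_rev, smul_apply, coe_innerSL_apply, nsmul_eq_mul, Nat.cast_ofNat,
    smul_eq_mul]
  field_simp

variable [FiniteDimensional ℝ E]

lemma inner_gradient_eq_sum {ι : Type*} [Fintype ι] (b : OrthonormalBasis ι ℝ E) (f g : E → ℝ)
    (x : E) : ⟪gradient f x, gradient g x⟫ = ∑ i, fderiv ℝ f x (b i) * fderiv ℝ g x (b i) := by
  rw [← b.sum_inner_mul_inner]
  congr! 1 with i
  rw [real_inner_comm (gradient g x)]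
  simp only [gradient, toDual_symm_apply]

lemma laplacian_eq_sum_fderiv_fderiv {ι : Type*} [Fintype ι] (b : OrthonormalBasis ι ℝ E)
    (f : E → ℝ) (x : E) : Δ f x = ∑ i, fderiv ℝ (fderiv ℝ f) x (b i) (b i) := by
  simp [laplacian_eq_iteratedFDeriv_orthonormalBasis f b, iteratedFDeriv_two_apply]

lemma ContDiffOn.continuousOn_laplacian {U : Set E} {f : E → ℝ} (hU : IsOpen U)
    (hf : ContDiffOn ℝ 2 f U) : ContinuousOn (Δ f) U := by
  rw [funext (laplacian_eq_sum_fderiv_fderiv (stdOrthonormalBasis ℝ E) f)]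
  exact continuousOn_finsetSum _ fun i _ ↦
    (((hf.fderiv_of_isOpen hU le_rfl).continuousOn_fderiv_of_isOpen hU le_rfl).clm_apply
      continuousOn_const).clm_apply continuousOn_const

lemma ContDiffOn.continuousOn_gradient {U : Set E} {f : E → ℝ} (hU : IsOpen U)
    (hf : ContDiffOn ℝ 1 f U) : ContinuousOn (gradient f) U :=
  (toDual ℝ E).symm.continuous.comp_continuousOn (hf.continuousOn_fderiv_of_isOpen hU le_rfl)

theorem laplacian_comp_norm {u u' : ℝ → ℝ} {u'' : ℝ} {x : E} (hx : x ≠ 0)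
    (hu : ∀ᶠ r in 𝓝 ‖x‖, HasDerivAt u (u' r) r) (hu' : HasDerivAt u' u'' ‖x‖) :
    Δ (fun y : E ↦ u ‖y‖) x = u'' + (Module.finrank ℝ E - 1) * u' ‖x‖ / ‖x‖ := by
  have hx₀ : ‖x‖ ≠ 0 := norm_ne_zero_iff.2 hx
  have hfd : fderiv ℝ (fun y ↦ u ‖y‖) =ᶠ[𝓝 x] fun y ↦ (u' ‖y‖ / ‖y‖) • innerSL ℝ y := by
    filter_upwards [(continuous_norm.tendsto x).eventually hu, isOpen_ne.mem_nhds hx]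
      with y hy hy₀
    exact (hy.hasFDerivAt_comp_norm hy₀).fderiv
  have hd2 := ((hu'.fun_div (hasDerivAt_id' _) hx₀).hasFDerivAt_comp_norm hx).fun_smul
    (innerSL ℝ (E := E)).hasFDerivAt
  beta_reduce at hd2
  set b := stdOrthonormalBasis ℝ E
  have hsq : ∑ i, ⟪x, b i⟫ * ⟪x, b i⟫ = ‖x‖ ^ 2 := by
    simp only [← b.sum_sq_inner_right x, real_inner_comm x, sq]
  rw [laplacian_eq_sum_fderiv_fderiv b, hfd.fderiv_eq, hd2.fderiv]
  have hinner : ∀ v w : E, innerSL ℝ v w = ⟪v, w⟫ := fun _ _ ↦ rfl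
  simp only [add_apply, smul_apply,
    ContinuousLinearMap.smulRight_apply, smul_eq_mul, hinner, b.inner_eq_one, sum_add_distrib,
    mul_assoc, ← mul_sum, hsq, sum_const, card_univ, Fintype.card_fin, nsmul_eq_mul]
  field_simp
  ring

lemma laplacian_comp_norm_of_logDeriv {u g : ℝ → ℝ} {g' : ℝ} {x : E} (hx : x ≠ 0)
    (hu : ∀ᶠ r in 𝓝 ‖x‖, HasDerivAt u (g r * u r) r) (hg : HasDerivAt g g' ‖x‖) :
    Δ (fun y : E ↦ u ‖y‖) x
      = (g' + g ‖x‖ ^ 2 + (Module.finrank ℝ E - 1) * g ‖x‖ / ‖x‖) * u ‖x‖ := by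
  rw [laplacian_comp_norm hx hu (hg.mul hu.self_of_nhds)]
  ring

variable [MeasurableSpace E] [BorelSpace E] {μ : Measure E} [μ.IsAddHaarMeasure]
  {U : Set E} {φ ψ : E → ℝ}

theorem integral_inner_gradient_eq_neg_integral_mul_laplacian (hU : IsOpen U)
    (hψ : ContDiffOn ℝ 2 ψ U) (hφ : ContDiff ℝ 1 φ) (hφc : HasCompactSupport φ)
    (hφU : tsupport φ ⊆ U) :
    ∫ x, ⟪gradient φ x, gradient ψ x⟫ ∂μ = -∫ x, φ x * Δ ψ x ∂μ := by
  set b := stdOrthonormalBasis ℝ E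
  have hψ' : ContDiffOn ℝ 1 (fderiv ℝ ψ) U := hψ.fderiv_of_isOpen hU le_rfl
  have hψ'' : ∀ x ∈ U, HasFDerivAt (fderiv ℝ ψ) (fderiv ℝ (fderiv ℝ ψ) x) x := fun x hx ↦
    ((hψ'.differentiableOn one_ne_zero x hx).differentiableAt (hU.mem_nhds hx)).hasFDerivAt
  have hint : ∀ {f g : E → ℝ}, Function.support f ⊆ tsupport φ → Continuous f →
      ContinuousOn g U → Integrable (fun x ↦ f x * g x) μ := fun hfφ hf hg ↦
    integrable_of_continuousOn_of_support_subset hφc (hf.continuousOn.mul (hg.mono hφU))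
      ((Function.support_mul_subset_left _ _).trans hfφ)
  have hφ' : ∀ v, Continuous fun x ↦ fderiv ℝ φ x v := fun v ↦
    (hφ.continuous_fderiv one_ne_zero).clm_apply continuous_const
  have hφ'φ : ∀ v, Function.support (fun x ↦ fderiv ℝ φ x v) ⊆ tsupport φ := fun v x hx ↦
    support_fderiv_subset ℝ fun h ↦ hx (by simp [h])
  have hint₁ : ∀ i, Integrable (fun x ↦ fderiv ℝ φ x (b i) * fderiv ℝ ψ x (b i)) μ := fun i ↦
    hint (hφ'φ _) (hφ' _) (hψ'.continuousOn.clm_apply continuousOn_const)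
  have hint₂ : ∀ i, Integrable (fun x ↦ φ x * fderiv ℝ (fderiv ℝ ψ) x (b i) (b i)) μ := fun i ↦
    hint (subset_tsupport φ) hφ.continuous
      (((hψ'.continuousOn_fderiv_of_isOpen hU le_rfl).clm_apply continuousOn_const).clm_apply
        continuousOn_const)
  -- Integration by parts only needs `∂ᵢψ` to be differentiable on `tsupport φ ⊆ U`, so `ψ`
  -- need not be extended beyond `U`.
  have hibp : ∀ i, ∫ x, φ x * fderiv ℝ (fderiv ℝ ψ) x (b i) (b i) ∂μ
      = -∫ x, fderiv ℝ φ x (b i) * fderiv ℝ ψ x (b i) ∂μ := fun i ↦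
    integral_bilinear_hasFDerivAt_right_eq_neg_left_of_integrable
      (B := ContinuousLinearMap.mul ℝ ℝ) (g := fun x ↦ fderiv ℝ ψ x (b i))
      (g' := fun x ↦ (fderiv ℝ (fderiv ℝ ψ) x).flip (b i)) (hint₁ i) (hint₂ i)
      (hint (subset_tsupport φ) hφ.continuous (hψ'.continuousOn.clm_apply continuousOn_const))
      (fun x _ ↦ (hφ.differentiable one_ne_zero x).hasFDerivAt)
      (fun x hx ↦ by simpa using (hψ'' x (hφU hx)).clm_apply (hasFDerivAt_const (b i) x))
  calc ∫ x, ⟪gradient φ x, gradient ψ x⟫ ∂μ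
      = ∫ x, ∑ i, fderiv ℝ φ x (b i) * fderiv ℝ ψ x (b i) ∂μ := by
        simp only [inner_gradient_eq_sum b]
    _ = -∑ i, ∫ x, φ x * fderiv ℝ (fderiv ℝ ψ) x (b i) (b i) ∂μ := by
        simp [integral_finsetSum _ fun i _ ↦ hint₁ i, hibp]
    _ = -∫ x, φ x * Δ ψ x ∂μ := by
        simp [← integral_finsetSum _ fun i _ ↦ hint₂ i, laplacian_eq_sum_fderiv_fderiv b, mul_sum]

theorem integral_inner_gradient_add_mul_nonpos_of_mul_le_laplacian (hU : IsOpen U)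
    (hψ : ContDiffOn ℝ 2 ψ U) {V : E → ℝ} (hV : LocallyIntegrableOn V U μ)
    (hVψ : ∀ x ∈ U, V x * ψ x ≤ Δ ψ x) (hφ : ContDiff ℝ 1 φ) (hφc : HasCompactSupport φ)
    (hφU : tsupport φ ⊆ U) (hφ0 : ∀ x, 0 ≤ φ x) :
    ∫ x, (⟪gradient φ x, gradient ψ x⟫ + V x * (φ x * ψ x)) ∂μ ≤ 0 := by
  have hφψ : ContinuousOn (fun x ↦ φ x * ψ x) (tsupport φ) :=
    hφ.continuous.continuousOn.mul (hψ.continuousOn.mono hφU)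
  have hgrad : Integrable (fun x ↦ ⟪gradient φ x, gradient ψ x⟫) μ := by
    refine integrable_of_continuousOn_of_support_subset hφc ?_ fun x hx ↦ ?_
    · exact ((hφ.contDiffOn.continuousOn_gradient isOpen_univ).mono (Set.subset_univ _)).inner
        ((hψ.of_le one_le_two |>.continuousOn_gradient hU).mono hφU)
    · refine support_fderiv_subset ℝ fun h ↦ hx ?_
      simp [gradient, h]
  have hpot : Integrable (fun x ↦ V x * (φ x * ψ x)) μ :=
    (integrableOn_iff_integrable_of_support_subset
      ((Function.support_mul_subset_right _ _).trans
        ((Function.support_mul_subset_left _ _).trans (subset_tsupport φ)))).1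
      ((hV.integrableOn_compact_subset hφU hφc).mul_continuousOn hφψ hφc)
  have hlap : Integrable (fun x ↦ φ x * Δ ψ x) μ :=
    integrable_of_continuousOn_of_support_subset hφc
      (hφ.continuous.continuousOn.mul ((hψ.continuousOn_laplacian hU).mono hφU))
      ((Function.support_mul_subset_left _ _).trans (subset_tsupport φ))
  rw [integral_add hgrad hpot,
    integral_inner_gradient_eq_neg_integral_mul_laplacian hU hψ hφ hφc hφU, neg_add_nonpos_iff]
  refine integral_mono hpot hlap fun x ↦ ?_
  by_cases hx : x ∈ tsupport φ
  · calc V x * (φ x * ψ x) = φ x * (V x * ψ x) := by ring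
      _ ≤ φ x * Δ ψ x := mul_le_mul_of_nonneg_left (hVψ x (hφU hx)) (hφ0 x)
  · simp [image_eq_zero_of_notMem_tsupport hx]

end Calculus

section IteratedLogarithm

lemma iterExp_monotone : Monotone iterExp :=
  monotone_nat_of_le_succ fun _ ↦ (le_add_of_nonneg_right zero_le_one).trans (add_one_le_exp _)

lemma iterExp_lt_iterLog {n k : ℕ} {r : ℝ} (h : iterExp (n + k) < r) :
    iterExp n < iterLog k r := by
  induction k generalizing n with
  | zero => exact h
  | succ k ih =>
    have hk : iterExp (n + 1) < iterLog k r := ih (by rwa [Nat.add_right_comm])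
    exact (lt_log_iff_exp_lt ((exp_pos _).trans hk)).2 hk

lemma iterLog_pos {k : ℕ} {r : ℝ} (h : iterExp k < r) : 0 < iterLog k r :=
  iterExp_lt_iterLog (n := 0) (by rwa [zero_add])

variable {m : ℕ} {r : ℝ}

lemma pos_of_iterExp_lt (h : iterExp m < r) : 0 < r :=
  (iterExp_monotone m.zero_le).trans_lt h

lemma iterExp_lt_of_mem_Icc {j : ℕ} (hj : j ∈ Icc 1 m) (h : iterExp m < r) : iterExp j < r :=
  (iterExp_monotone (mem_Icc.1 hj).2).trans_lt h

noncomputable def iterLogInvProd (j : ℕ) (r : ℝ) : ℝ := ∏ k ∈ Icc 1 j, (iterLog k r)⁻¹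

lemma iterLogInvProd_succ (j : ℕ) (r : ℝ) :
    iterLogInvProd (j + 1) r = iterLogInvProd j r * (iterLog (j + 1) r)⁻¹ :=
  prod_Icc_succ_top (by omega) _

lemma iterLogInvProd_pos {j : ℕ} (h : iterExp j < r) : 0 < iterLogInvProd j r :=
  prod_pos fun _ hk ↦ inv_pos.2 (iterLog_pos (iterExp_lt_of_mem_Icc hk h))

lemma hasDerivAt_log_iterLog {k : ℕ} (h : iterExp k < r) :
    HasDerivAt (fun s ↦ log (iterLog k s)) (iterLogInvProd k r / r) r := by
  induction k with
  | zero => simpa [iterLog, iterLogInvProd, one_div] using hasDerivAt_log h.ne'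
  | succ k ih =>
    have hk := ih ((iterExp_monotone k.le_succ).trans_lt h)
    refine (hk.log (iterLog_pos h).ne').congr_deriv ?_
    rw [iterLogInvProd_succ]
    field_simp
    rfl

lemma hasDerivAt_iterLogInvProd {j : ℕ} (h : iterExp j < r) :
    HasDerivAt (iterLogInvProd j)
      (-(iterLogInvProd j r * ∑ k ∈ Icc 1 j, iterLogInvProd k r) / r) r := by
  induction j with
  | zero =>
    rw [show iterLogInvProd 0 = fun _ ↦ 1 from funext fun _ ↦ prod_empty]
    simpa using hasDerivAt_const r (1 : ℝ)
  | succ j ih =>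
    have hj := (iterExp_monotone j.le_succ).trans_lt h
    have hlog := iterLog_pos h
    refine HasDerivAt.congr_of_eventuallyEq ?_ (Eventually.of_forall (iterLogInvProd_succ j))
    refine ((ih hj).mul ((hasDerivAt_log_iterLog hj).inv hlog.ne')).congr_deriv ?_
    change _ * (iterLog (j + 1) r)⁻¹ + _ * (_ / iterLog (j + 1) r ^ 2) = _
    rw [sum_Icc_succ_top (by omega), iterLogInvProd_succ]
    field_simp
    ring

lemma contDiffAt_iterLog {n : WithTop ℕ∞} {k : ℕ} (h : iterExp k < r) :
    ContDiffAt ℝ n (iterLog k) r := by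
  induction k with
  | zero => exact contDiffAt_id
  | succ k ih =>
    have hk := (iterExp_monotone k.le_succ).trans_lt h
    exact (ih hk).log (iterLog_pos hk).ne'

end IteratedLogarithm

section Profile

variable {α : ℝ} {m : ℕ} {r : ℝ}

noncomputable def psiLProfile (α : ℝ) (m : ℕ) (r : ℝ) : ℝ :=
  r ^ α * ∏ j ∈ Icc 1 m, iterLog j r ^ (-(1 : ℝ) / 2)

noncomputable def psiLLogDeriv (α : ℝ) (m : ℕ) (r : ℝ) : ℝ :=
  (α - (∑ j ∈ Icc 1 m, iterLogInvProd j r) / 2) / r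

lemma psiLProfile_eq_exp (h : iterExp m < r) :
    psiLProfile α m r = exp (α * log r - ∑ j ∈ Icc 1 m, log (iterLog j r) / 2) := by
  rw [psiLProfile, rpow_def_of_pos (pos_of_iterExp_lt h), sub_eq_add_neg, exp_add, ← sum_neg_distrib, exp_sum]
  congr 1
  · ring_nf
  · refine prod_congr rfl fun j hj ↦ ?_
    rw [rpow_def_of_pos (iterLog_pos (iterExp_lt_of_mem_Icc hj h))]
    ring_nf

lemma psiLProfile_pos (h : iterExp m < r) : 0 < psiLProfile α m r := by
  rw [psiLProfile_eq_exp h]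
  exact exp_pos _

lemma hasDerivAt_psiLProfile (h : iterExp m < r) :
    HasDerivAt (psiLProfile α m) (psiLLogDeriv α m r * psiLProfile α m r) r := by
  have hr : 0 < r := pos_of_iterExp_lt h
  have hexp := (((hasDerivAt_log hr.ne').const_mul α).sub (HasDerivAt.fun_sum fun j hj ↦
    (hasDerivAt_log_iterLog (iterExp_lt_of_mem_Icc hj h)).div_const 2)).exp
  refine (hexp.congr_of_eventuallyEq ?_).congr_deriv ?_
  · filter_upwards [Ioi_mem_nhds h] with s hs using psiLProfile_eq_exp hs
  · simp only [psiLProfile_eq_exp h, psiLLogDeriv, Pi.sub_apply, ← sum_div]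
    field_simp

lemma hasDerivAt_psiLLogDeriv (h : iterExp m < r) :
    HasDerivAt (psiLLogDeriv α m)
      ((∑ j ∈ Icc 1 m, iterLogInvProd j r * ∑ k ∈ Icc 1 j, iterLogInvProd k r) / (2 * r ^ 2)
        - psiLLogDeriv α m r / r) r := by
  have hr : 0 < r := pos_of_iterExp_lt h
  refine (((hasDerivAt_const r α).sub ((HasDerivAt.fun_sum fun j hj ↦
    hasDerivAt_iterLogInvProd (iterExp_lt_of_mem_Icc hj h)).div_const 2)).fun_div
    (hasDerivAt_id' r) hr.ne').congr_deriv ?_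
  simp only [psiLLogDeriv, Pi.sub_apply, neg_div, sum_neg_distrib, ← sum_div]
  field_simp
  ring

lemma contDiffAt_psiLProfile {n : WithTop ℕ∞} (h : iterExp m < r) :
    ContDiffAt ℝ n (psiLProfile α m) r := by
  have hr : 0 < r := pos_of_iterExp_lt h
  refine ContDiffAt.congr_of_eventuallyEq ?_ (eventually_of_mem (Ioi_mem_nhds h)
    fun s hs ↦ psiLProfile_eq_exp hs)
  exact (contDiffAt_const.mul (contDiffAt_id.log hr.ne')).sub
    (ContDiffAt.sum fun j hj ↦ ((contDiffAt_iterLog (iterExp_lt_of_mem_Icc hj h)).log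
      (iterLog_pos (iterExp_lt_of_mem_Icc hj h)).ne').div_const 2) |>.exp

end Profile

section PsiL

variable {d : ℕ} {c : ℝ} {m : ℕ}

lemma psiL_eq_comp_norm (d : ℕ) (c : ℝ) (m : ℕ) :
    psiL d c m = fun x ↦ psiLProfile (-(c / 2) - d / 2) m ‖x‖ := rfl

lemma contDiffOn_psiL {n : WithTop ℕ∞} :
    ContDiffOn ℝ n (psiL d c m) {x | iterExp m < ‖x‖} := fun x hx ↦
  ((contDiffAt_psiLProfile hx).comp x
    (contDiffAt_norm ℝ (norm_pos_iff.1 (pos_of_iterExp_lt hx)))).contDiffWithinAt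

lemma lowerBound_le {r : ℝ} (h : iterExp m < r) :
    lowerBound d c m r ≤
      (∑ j ∈ Icc 1 m, iterLogInvProd j r * ∑ k ∈ Icc 1 j, iterLogInvProd k r) / (2 * r ^ 2)
        - psiLLogDeriv (-(c / 2) - d / 2) m r / r + psiLLogDeriv (-(c / 2) - d / 2) m r ^ 2
        + (d - 1) * psiLLogDeriv (-(c / 2) - d / 2) m r / r := by
  have hr := pos_of_iterExp_lt h
  -- The right-hand side is `Δψ / ψ` (see `laplacian_comp_norm_of_logDeriv`).
  set T := ∑ j ∈ Icc 1 m, iterLogInvProd j r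
  set S := ∑ j ∈ Icc 1 m, iterLogInvProd j r * ∑ k ∈ Icc 1 j, iterLogInvProd k r
  have hT : 0 ≤ T := sum_nonneg fun j hj ↦ (iterLogInvProd_pos (iterExp_lt_of_mem_Icc hj h)).le
  have hS : 0 ≤ S := sum_nonneg fun j hj ↦ mul_nonneg
    (iterLogInvProd_pos (iterExp_lt_of_mem_Icc hj h)).le
    (sum_nonneg fun k hk ↦ (iterLogInvProd_pos (iterExp_lt_of_mem_Icc
      (Icc_subset_Icc_right (mem_Icc.1 hj).2 hk) h)).le)
  have hlb : lowerBound d c m r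
      = ((d : ℝ) * (4 - d) + 4 * c + c ^ 2) / (4 * r ^ 2) + ((c + 2) / (2 * r ^ 2)) * T := rfl
  rw [← sub_nonneg]
  convert_to 0 ≤ (T ^ 2 / 4 + S / 2) / r ^ 2
  · simp only [hlb, psiLLogDeriv]
    field_simp
    ring
  · positivity

lemma lowerBound_mul_psiL_le_laplacian {x : EuclideanSpace ℝ (Fin d)} (hx : iterExp m < ‖x‖) :
    lowerBound d c m ‖x‖ * psiL d c m x ≤ Δ (psiL d c m) x := by
  rw [psiL_eq_comp_norm, laplacian_comp_norm_of_logDeriv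
    (norm_pos_iff.1 (pos_of_iterExp_lt hx))
    (eventually_of_mem (Ioi_mem_nhds hx) fun r hr ↦ hasDerivAt_psiLProfile hr)
    (hasDerivAt_psiLLogDeriv hx), finrank_euclideanSpace_fin]
  refine mul_le_mul_of_nonneg_right ?_ (psiLProfile_pos hx).le
  linarith [lowerBound_le (d := d) (c := c) hx]

end PsiL

theorem psiL_subsolution_general (d : ℕ) (c : ℝ) (m : ℕ)
    (R : ℝ) (hR : iterExp m ≤ R)
    (V : EuclideanSpace ℝ (Fin d) → ℝ)
    (hVloc : LocallyIntegrableOn V {x : EuclideanSpace ℝ (Fin d) | R < ‖x‖})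
    (hV : ∀ x : EuclideanSpace ℝ (Fin d), R < ‖x‖ → V x ≤ lowerBound d c m ‖x‖) :
    ∀ φ : EuclideanSpace ℝ (Fin d) → ℝ, ContDiff ℝ (⊤ : ℕ∞) φ → HasCompactSupport φ →
      tsupport φ ⊆ {x : EuclideanSpace ℝ (Fin d) | R < ‖x‖} → (∀ x, 0 ≤ φ x) →
      ∫ x, (⟪gradient φ x, gradient (psiL d c m) x⟫ + V x * (φ x * psiL d c m x)) ≤ 0 := by
  intro φ hφ hφc hφU hφ0
  have hU : {x : EuclideanSpace ℝ (Fin d) | R < ‖x‖} ⊆ {x | iterExp m < ‖x‖} :=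
    fun _ hx ↦ hR.trans_lt hx
  refine integral_inner_gradient_add_mul_nonpos_of_mul_le_laplacian
    (isOpen_lt continuous_const continuous_norm) (contDiffOn_psiL.mono hU) hVloc
    (fun x hx ↦ ?_) (hφ.of_le (by simp)) hφc hφU hφ0
  exact (mul_le_mul_of_nonneg_right (hV x hx) (psiLProfile_pos (hU hx)).le).trans
    (lowerBound_mul_psiL_le_laplacian (hU hx))

/-- If `V ≤ lowerBound` on `U_R = {|x| > R}` with `R ≥ e_m`, then `ψˡ_{c,m}` is a
subsolution of `-Δ + V` at energy `0` on `U_R`: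
`∫ (∇φ·∇ψˡ + V φ ψˡ) ≤ 0` for every nonnegative `φ ∈ C_c^∞(U_R)`. -/
theorem psiL_subsolution (d : ℕ) (hd : 0 < d) (c : ℝ) (hc : 0 ≤ c) (m : ℕ)
    (R : ℝ) (hR : iterExp m ≤ R)
    (V : EuclideanSpace ℝ (Fin d) → ℝ)
    (hVloc : LocallyIntegrableOn V {x : EuclideanSpace ℝ (Fin d) | R < ‖x‖})
    (hV : ∀ x : EuclideanSpace ℝ (Fin d), R < ‖x‖ → V x ≤ lowerBound d c m ‖x‖) :
    ∀ φ : EuclideanSpace ℝ (Fin d) → ℝ, ContDiff ℝ (⊤ : ℕ∞) φ → HasCompactSupport φ →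
      tsupport φ ⊆ {x : EuclideanSpace ℝ (Fin d) | R < ‖x‖} → (∀ x, 0 ≤ φ x) →
      ∫ x, (⟪gradient φ x, gradient (psiL d c m) x⟫ + V x * (φ x * psiL d c m x)) ≤ 0 :=
  psiL_subsolution_general d c m R hR V hVloc hV
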